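/- For every integer n ≥ 2, ∑_{i=0}^{n-2} (n−1)·(n+i−2)!/i! = (2n−3)!/(n−2)!. -/

import Mathlib

/-! With `m = n - 2`, each term is `(m + 1) * (m + i)! / i! = (m + 1)! * C(i + m, m)`, and the
hockey-stick identity sums these to `(m + 1)! * C(2m + 1, m + 1) = (2m + 1)! / m!`. -/

open Finset Nat

section

variable {K : Type*} [Field K] [CharZero K]

theorem Nat.cast_factorial_add_div_factorial (k i : ℕ) :
    ((k + i)! : K) / i ! = k ! * (i + k).choose k := by
  have : (k ! : K) ≠ 0 := Nat.cast_ne_zero.2 k.factorial_ne_zero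
  rw [add_comm i k, Nat.cast_add_choose]
  field_simp

theorem sum_range_factorial_add_div_factorial (n k : ℕ) :
    ∑ i ∈ range (n + 1), ((k + i)! : K) / i ! = (n + k + 1)! / ((k + 1) * n !) := by
  simp_rw [Nat.cast_factorial_add_div_factorial, ← mul_sum]
  rw [← Nat.cast_sum, Nat.sum_range_add_choose, Nat.cast_choose K (by omega),
    show n + k + 1 - (k + 1) = n by omega, Nat.factorial_succ k]
  have : (k ! : K) ≠ 0 := Nat.cast_ne_zero.2 k.factorial_ne_zero
  push_cast
  field_simp

end

/-- For every integer `n ≥ 2`, `∑_{i=0}^{n-2} (n−1)·(n+i−2)!/i! = (2n−3)!/(n−2)!`. -/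
theorem sum_factorial_ratio_typeD (n : ℕ) (hn : 2 ≤ n) :
    (∑ i ∈ Finset.range (n - 1),
        ((n : ℚ) - 1) * (Nat.factorial (n + i - 2) : ℚ) / (Nat.factorial i : ℚ))
      = (Nat.factorial (2 * n - 3) : ℚ) / (Nat.factorial (n - 2) : ℚ) := by
  obtain ⟨m, rfl⟩ : ∃ m, n = m + 2 := ⟨n - 2, by omega⟩
  have hrange : m + 2 - 1 = m + 1 := by omega
  have hnum : 2 * (m + 2) - 3 = m + m + 1 := by omega
  have hsummand (i : ℕ) : m + 2 + i - 2 = m + i := by omega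
  simp_rw [hrange, hnum, hsummand, Nat.add_sub_cancel, mul_div_assoc, ← mul_sum,
    sum_range_factorial_add_div_factorial]
  push_cast
  field_simp
  ring
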